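/- arXiv:2203.11830 — 2 statements merged into one kernel-verified Lean document; each statement's English description precedes it below -/
import Mathlib

section
/- For every complex number p with Re(p) > -γ, the function c ↦ e^{pc}·μγA e^{γc}·e^{-μA e^{γc}} is Lebesgue integrable on ℝ; moreover, the function f defined by f(p) = (1/p)·∫_ℝ e^{pc}·μγA e^{γc}·e^{-μA e^{γc}} dc is holomorphic (complex differentiable) at every point of the set {p ∈ ℂ : Re(p) > -γ and p ≠ 0}. -/
/-!
The weight `c ↦ a γ e^{γc} e^{-a e^{γc}}` is the density of `γ⁻¹ log (U / a)` for `U` a standard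
exponential variable. Substituting `u = a e^{γc}` turns the integral of `e^{pc}` against it into
`∫₀^∞ (u / a)^{p/γ} e^{-u} du = a^{-p/γ} Γ(p/γ + 1)`, which converges and is holomorphic in `p`
for `Re p > -γ`; dividing by `p` keeps it holomorphic away from `0`.
-/

open MeasureTheory Set

section

variable {E : Type*} [NormedAddCommGroup E] [NormedSpace ℝ E] {a γ : ℝ}

theorem range_const_mul_exp_mul (ha : 0 < a) (hγ : γ ≠ 0) :
    range (fun c : ℝ => a * Real.exp (γ * c)) = Ioi 0 := by
  refine Subset.antisymm (range_subset_iff.2 fun c => mem_Ioi.2 (by positivity))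
    fun u (hu : 0 < u) => ⟨Real.log (u / a) / γ, ?_⟩
  simp only [mul_div_cancel₀ _ hγ, Real.exp_log (div_pos hu ha), mul_div_cancel₀ _ ha.ne']

theorem hasDerivAt_const_mul_exp_mul (a γ c : ℝ) :
    HasDerivAt (fun c : ℝ => a * Real.exp (γ * c)) (a * γ * Real.exp (γ * c)) c := by
  simpa [mul_comm, mul_left_comm, mul_assoc] using
    (((hasDerivAt_id c).const_mul γ).exp).const_mul a

theorem injective_const_mul_exp_mul (ha : a ≠ 0) (hγ : γ ≠ 0) :
    Function.Injective (fun c : ℝ => a * Real.exp (γ * c)) := fun _ _ h =>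
  mul_left_cancel₀ hγ (Real.exp_injective (mul_left_cancel₀ ha h))

theorem integrable_comp_const_mul_exp_mul_iff (ha : 0 < a) (hγ : 0 < γ) (g : ℝ → E) :
    Integrable (fun c => (a * γ * Real.exp (γ * c)) • g (a * Real.exp (γ * c))) ↔
      IntegrableOn g (Ioi 0) := by
  have := integrableOn_image_iff_integrableOn_abs_deriv_smul MeasurableSet.univ
    (fun c _ => (hasDerivAt_const_mul_exp_mul a γ c).hasDerivWithinAt)
    (injective_const_mul_exp_mul ha.ne' hγ.ne').injOn g
  rw [image_univ, range_const_mul_exp_mul ha hγ.ne', integrableOn_univ] at this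
  simpa only [abs_of_pos (by positivity : 0 < a * γ * Real.exp (γ * _))] using this.symm

theorem integral_comp_const_mul_exp_mul (ha : 0 < a) (hγ : 0 < γ) (g : ℝ → E) :
    ∫ c, (a * γ * Real.exp (γ * c)) • g (a * Real.exp (γ * c)) = ∫ u in Ioi 0, g u := by
  have := integral_image_eq_integral_abs_deriv_smul MeasurableSet.univ
    (fun c _ => (hasDerivAt_const_mul_exp_mul a γ c).hasDerivWithinAt)
    (injective_const_mul_exp_mul ha.ne' hγ.ne').injOn g
  rw [image_univ, range_const_mul_exp_mul ha hγ.ne', setIntegral_univ] at this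
  simpa only [abs_of_pos (by positivity : 0 < a * γ * Real.exp (γ * _))] using this.symm

end

theorem Complex.ofReal_exp_cpow (x : ℝ) (w : ℂ) : (Real.exp x : ℂ) ^ w = Complex.exp (x * w) := by
  rw [Complex.cpow_def_of_ne_zero (by exact_mod_cast (Real.exp_pos x).ne'), ← Complex.ofReal_log
    (Real.exp_pos x).le, Real.log_exp]

section

variable {a γ : ℝ}

theorem cexp_mul_eq_cpow_mul_cpow (ha : 0 < a) (hγ : γ ≠ 0) (p : ℂ) (c : ℝ) :
    Complex.exp (p * c) = (a : ℂ) ^ (-(p / γ)) * ((a * Real.exp (γ * c) : ℝ) : ℂ) ^ (p / γ) := by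
  have ha' : (a : ℂ) ^ (p / γ) ≠ 0 := by simp [Complex.cpow_def, ha.ne']
  rw [Complex.ofReal_mul, Complex.mul_cpow_ofReal_nonneg ha.le (Real.exp_pos _).le,
    Complex.ofReal_exp_cpow, Complex.cpow_neg, inv_mul_cancel_left₀ ha']
  have hγ' : (γ : ℂ) ≠ 0 := by exact_mod_cast hγ
  congr 1
  push_cast
  field_simp

theorem cexp_mul_density_eq (ha : 0 < a) (hγ : γ ≠ 0) (p : ℂ) (c : ℝ) :
    Complex.exp (p * c) * ((a * γ * Real.exp (γ * c) : ℝ) : ℂ) *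
        ((Real.exp (-(a * Real.exp (γ * c))) : ℝ) : ℂ) =
      (a * γ * Real.exp (γ * c)) • ((a : ℂ) ^ (-(p / γ)) *
        (Real.exp (-(a * Real.exp (γ * c))) * ((a * Real.exp (γ * c) : ℝ) : ℂ) ^ (p / γ))) := by
  rw [cexp_mul_eq_cpow_mul_cpow ha hγ p c, Complex.real_smul]
  ring

theorem re_div_add_one_pos (hγ : 0 < γ) {p : ℂ} (hp : -γ < p.re) : 0 < (p / γ + 1).re := by
  rw [Complex.add_re, Complex.div_ofReal_re, Complex.one_re, ← neg_lt_iff_pos_add,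
    lt_div_iff₀ hγ]
  linarith

theorem integrable_cexp_mul_density (ha : 0 < a) (hγ : 0 < γ) {p : ℂ} (hp : -γ < p.re) :
    Integrable (fun c : ℝ => Complex.exp (p * c) * ((a * γ * Real.exp (γ * c) : ℝ) : ℂ) *
        ((Real.exp (-(a * Real.exp (γ * c))) : ℝ) : ℂ)) := by
  simp_rw [cexp_mul_density_eq ha hγ.ne']
  refine (integrable_comp_const_mul_exp_mul_iff ha hγ (fun u => (a : ℂ) ^ (-(p / γ)) *
    (Real.exp (-u) * (u : ℂ) ^ (p / γ)))).2 ?_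
  have := Complex.GammaIntegral_convergent (re_div_add_one_pos hγ hp)
  rw [add_sub_cancel_right] at this
  exact this.const_mul _

theorem integral_cexp_mul_density (ha : 0 < a) (hγ : 0 < γ) {p : ℂ} (hp : -γ < p.re) :
    ∫ c : ℝ, Complex.exp (p * c) * ((a * γ * Real.exp (γ * c) : ℝ) : ℂ) *
        ((Real.exp (-(a * Real.exp (γ * c))) : ℝ) : ℂ) =
      (a : ℂ) ^ (-(p / γ)) * Complex.Gamma (p / γ + 1) := by
  simp_rw [cexp_mul_density_eq ha hγ.ne']
  rw [integral_comp_const_mul_exp_mul ha hγ (fun u => (a : ℂ) ^ (-(p / γ)) *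
    (Real.exp (-u) * (u : ℂ) ^ (p / γ))), integral_const_mul,
    Complex.Gamma_eq_integral (re_div_add_one_pos hγ hp), Complex.GammaIntegral,
    add_sub_cancel_right]

theorem Complex.differentiableAt_Gamma_of_re_pos {s : ℂ} (hs : 0 < s.re) :
    DifferentiableAt ℂ Complex.Gamma s := by
  refine Complex.differentiableAt_Gamma s fun m hm => ?_
  rw [hm, Complex.neg_re, Complex.natCast_re] at hs
  linarith [m.cast_nonneg (α := ℝ)]

theorem differentiableAt_integral_cexp_mul_density (ha : 0 < a) (hγ : 0 < γ) {p : ℂ}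
    (hp : -γ < p.re) :
    DifferentiableAt ℂ (fun q : ℂ => ∫ c : ℝ, Complex.exp (q * c) *
        ((a * γ * Real.exp (γ * c) : ℝ) : ℂ) * ((Real.exp (-(a * Real.exp (γ * c))) : ℝ) : ℂ)) p := by
  have hGammaFormula : DifferentiableAt ℂ
      (fun q : ℂ => (a : ℂ) ^ (-(q / γ)) * Complex.Gamma (q / γ + 1)) p :=
    ((differentiableAt_id.div_const _).neg.const_cpow (.inl (by exact_mod_cast ha.ne'))).mul
      ((Complex.differentiableAt_Gamma_of_re_pos (re_div_add_one_pos hγ hp)).comp p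
        ((differentiableAt_id.div_const _).add_const 1))
  refine hGammaFormula.congr_of_eventuallyEq ?_
  filter_upwards [(isOpen_lt continuous_const Complex.continuous_re).mem_nhds hp] with q hq
  exact integral_cexp_mul_density ha hγ hq

end

/-- Fix real constants `A > 0`, `μ > 0`, `γ > 0`.  For every complex `p` with
`Re p > -γ`, the function `c ↦ e^{pc} · μγA e^{γc} · e^{-μA e^{γc}}` is Lebesgue integrable on
`ℝ`, and moreover `f(p) = (1/p) ∫_ℝ e^{pc} · μγA e^{γc} · e^{-μA e^{γc}} dc` is complex
differentiable at every point of `{p : Re p > -γ, p ≠ 0}`. -/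
theorem stmt_0 (A μ γ : ℝ) (hA : 0 < A) (hμ : 0 < μ) (hγ : 0 < γ) :
    (∀ p : ℂ, -γ < p.re →
      Integrable (fun c : ℝ =>
        Complex.exp (p * (c : ℂ)) * ((μ * γ * A * Real.exp (γ * c) : ℝ) : ℂ) *
          ((Real.exp (-(μ * A * Real.exp (γ * c))) : ℝ) : ℂ))) ∧
    (∀ p : ℂ, -γ < p.re → p ≠ 0 →
      DifferentiableAt ℂ
        (fun p : ℂ => (1 / p) *
          ∫ c : ℝ, Complex.exp (p * (c : ℂ)) * ((μ * γ * A * Real.exp (γ * c) : ℝ) : ℂ) *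
            ((Real.exp (-(μ * A * Real.exp (γ * c))) : ℝ) : ℂ)) p) := by
  have hμA : 0 < μ * A := mul_pos hμ hA
  simp_rw [mul_right_comm μ γ A]
  exact ⟨fun p hp => integrable_cexp_mul_density hμA hγ hp, fun p hp hp0 =>
    ((differentiableAt_const 1).div differentiableAt_id hp0).mul
      (differentiableAt_integral_cexp_mul_density hμA hγ hp)⟩
end

section
/- For every real number p with -γ < p < 0, the function c ↦ e^{pc}·(e^{-μA e^{γc}} − 1) is Lebesgue integrable on ℝ, the function c ↦ e^{pc}·μγA e^{γc}·e^{-μA e^{γc}} is Lebesgue integrable on ℝ, and p·∫_ℝ e^{pc}(e^{-μA e^{γc}} − 1) dc = ∫_ℝ e^{pc}·μγA e^{γc}·e^{-μA e^{γc}} dc. -/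
/-!
With `x = μ A e^{γc}`, both integrands have the form `e^{pc} φ(x)` where `|φ(x)| ≲ min(1, x)`, so
they are dominated by `e^{pc}` as `c → ∞` and by `e^{(p+γ)c}` as `c → -∞`; this is where
`-γ < p < 0` enters. Writing `f` and `g` for the two integrands, `f' = p f - g`, and the integral
over `ℝ` of the derivative of an integrable function with integrable derivative vanishes.
-/

open MeasureTheory Real Set

theorem integrable_of_norm_le_exp_mul {E : Type*} [NormedAddCommGroup E] {f : ℝ → E}
    {a b C D : ℝ} (hf : AEStronglyMeasurable f) (ha : a < 0) (hb : 0 < b)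
    (hfa : ∀ c, ‖f c‖ ≤ C * exp (a * c)) (hfb : ∀ c, ‖f c‖ ≤ D * exp (b * c)) :
    Integrable f := by
  rw [← integrableOn_univ, ← Iic_union_Ioi (a := 0), integrableOn_union]
  exact ⟨((integrableOn_exp_mul_Iic hb 0).const_mul D).mono' hf.restrict (ae_of_all _ hfb),
    ((integrableOn_exp_mul_Ioi ha 0).const_mul C).mono' hf.restrict (ae_of_all _ hfa)⟩

theorem integrable_exp_mul_mul_comp_mul_exp {φ : ℝ → ℝ} {k γ p : ℝ} (hφ : Continuous φ)
    (hk : 0 ≤ k) (hpγ : -γ < p) (hp : p < 0)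
    (hφ_one : ∀ x, 0 ≤ x → |φ x| ≤ 1) (hφ_id : ∀ x, 0 ≤ x → |φ x| ≤ x) :
    Integrable fun c => exp (p * c) * φ (k * exp (γ * c)) := by
  have hx : ∀ c, 0 ≤ k * exp (γ * c) := fun c => by positivity
  have hnorm : ∀ c, ‖exp (p * c) * φ (k * exp (γ * c))‖ = exp (p * c) * |φ (k * exp (γ * c))| :=
    fun c => by rw [norm_mul, norm_of_nonneg (exp_pos _).le, Real.norm_eq_abs]
  refine integrable_of_norm_le_exp_mul (by fun_prop : Continuous _).aestronglyMeasurable hp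
    (by linarith : 0 < p + γ) (C := 1) (D := k) (fun c => ?_) (fun c => ?_)
  · rw [hnorm, one_mul]
    exact mul_le_of_le_one_right (exp_pos _).le (hφ_one _ (hx c))
  · calc ‖exp (p * c) * φ (k * exp (γ * c))‖ ≤ exp (p * c) * (k * exp (γ * c)) := by
          rw [hnorm]; gcongr; exact hφ_id _ (hx c)
      _ = k * exp ((p + γ) * c) := by rw [add_mul, exp_add]; ring

namespace Real

theorem abs_exp_neg_sub_one_le_one {x : ℝ} (hx : 0 ≤ x) : |exp (-x) - 1| ≤ 1 := by
  rw [abs_sub_comm, abs_of_nonneg (by simpa using hx)]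
  linarith [exp_pos (-x)]

theorem abs_exp_neg_sub_one_le {x : ℝ} (hx : 0 ≤ x) : |exp (-x) - 1| ≤ x := by
  rw [abs_sub_comm, abs_of_nonneg (by simpa using hx)]
  linarith [one_sub_le_exp_neg x]

theorem abs_mul_exp_neg_le_one {x : ℝ} (hx : 0 ≤ x) : |x * exp (-x)| ≤ 1 := by
  rw [abs_of_nonneg (by positivity)]
  exact (mul_exp_neg_le_exp_neg_one x).trans (exp_le_one_iff.2 (by norm_num))

theorem abs_mul_exp_neg_le {x : ℝ} (hx : 0 ≤ x) : |x * exp (-x)| ≤ x := by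
  rw [abs_of_nonneg (by positivity)]
  exact mul_le_of_le_one_right hx (exp_le_one_iff.2 (neg_nonpos.2 hx))

end Real

theorem hasDerivAt_exp_mul_mul_exp_neg_mul_exp_sub_one (k γ p c : ℝ) :
    HasDerivAt (fun c => exp (p * c) * (exp (-(k * exp (γ * c))) - 1))
      (p * (exp (p * c) * (exp (-(k * exp (γ * c))) - 1)) -
        exp (p * c) * (k * γ * exp (γ * c)) * exp (-(k * exp (γ * c)))) c := by
  have hp := ((hasDerivAt_id' c).const_mul p).exp
  have hu := (((hasDerivAt_id' c).const_mul γ).exp.const_mul k).fun_neg.exp.sub_const 1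
  exact (hp.fun_mul hu).congr_deriv (by ring)

theorem stmt_2_general (A μ γ : ℝ) (hA : 0 < A) (hμ : 0 < μ) :
    ∀ p : ℝ, -γ < p → p < 0 →
      Integrable (fun c : ℝ =>
        Real.exp (p * c) * (Real.exp (-(μ * A * Real.exp (γ * c))) - 1)) ∧
      Integrable (fun c : ℝ =>
        Real.exp (p * c) * (μ * γ * A * Real.exp (γ * c)) *
          Real.exp (-(μ * A * Real.exp (γ * c)))) ∧
      p * ∫ c : ℝ, Real.exp (p * c) * (Real.exp (-(μ * A * Real.exp (γ * c))) - 1) =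
        ∫ c : ℝ, Real.exp (p * c) * (μ * γ * A * Real.exp (γ * c)) *
          Real.exp (-(μ * A * Real.exp (γ * c))) := by
  intro p hpγ hp
  have hk : 0 ≤ μ * A := by positivity
  have hf := integrable_exp_mul_mul_comp_mul_exp (φ := fun x => exp (-x) - 1)
    (by fun_prop) hk hpγ hp (fun _ => abs_exp_neg_sub_one_le_one)
    (fun _ => abs_exp_neg_sub_one_le)
  have hg : Integrable fun c : ℝ =>
      exp (p * c) * (μ * γ * A * exp (γ * c)) * exp (-(μ * A * exp (γ * c))) :=
    ((integrable_exp_mul_mul_comp_mul_exp (φ := fun x => x * exp (-x)) (by fun_prop) hk hpγ hp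
      (fun _ => abs_mul_exp_neg_le_one) (fun _ => abs_mul_exp_neg_le)).const_mul γ).congr
      (ae_of_all _ fun c => by ring)
  have hderiv_integral := integral_eq_zero_of_hasDerivAt_of_integrable
    (f' := fun c => p * (exp (p * c) * (exp (-(μ * A * exp (γ * c))) - 1)) -
      exp (p * c) * (μ * γ * A * exp (γ * c)) * exp (-(μ * A * exp (γ * c))))
    (fun c => (hasDerivAt_exp_mul_mul_exp_neg_mul_exp_sub_one (μ * A) γ p c).congr_deriv
      (by ring)) ((hf.const_mul p).sub hg) hf
  rw [integral_sub (hf.const_mul p) hg, integral_const_mul, sub_eq_zero] at hderiv_integral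
  exact ⟨hf, hg, hderiv_integral⟩

/-- Fix real constants `A > 0`, `μ > 0`, `γ > 0`.  For every real `p` with
`-γ < p < 0`, the functions `c ↦ e^{pc}(e^{-μA e^{γc}} - 1)` and
`c ↦ e^{pc} · μγA e^{γc} · e^{-μA e^{γc}}` are Lebesgue integrable on `ℝ`, and
`p · ∫_ℝ e^{pc}(e^{-μA e^{γc}} - 1) dc = ∫_ℝ e^{pc} · μγA e^{γc} · e^{-μA e^{γc}} dc`. -/
theorem stmt_2 (A μ γ : ℝ) (hA : 0 < A) (hμ : 0 < μ) (hγ : 0 < γ) :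
    ∀ p : ℝ, -γ < p → p < 0 →
      Integrable (fun c : ℝ =>
        Real.exp (p * c) * (Real.exp (-(μ * A * Real.exp (γ * c))) - 1)) ∧
      Integrable (fun c : ℝ =>
        Real.exp (p * c) * (μ * γ * A * Real.exp (γ * c)) *
          Real.exp (-(μ * A * Real.exp (γ * c)))) ∧
      p * ∫ c : ℝ, Real.exp (p * c) * (Real.exp (-(μ * A * Real.exp (γ * c))) - 1) =
        ∫ c : ℝ, Real.exp (p * c) * (μ * γ * A * Real.exp (γ * c)) *
          Real.exp (-(μ * A * Real.exp (γ * c))) :=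
  stmt_2_general A μ γ hA hμ
end
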